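/- arXiv:math/0209226 — 3 statements merged into one kernel-verified Lean document; each statement's English description precedes it below -/
import Mathlib

section
/- Let ρ₁, …, ρ_{n+1} : Q → Q be maps of a set Q ⊆ ℝ^{n+1} of the form ρ_i(x) = x - 2λ_i(x)u_i, where λ_i : Q → ℝ and u₁,…,u_{n+1} ∈ ℝ^{n+1} are linearly independent. If y ∈ Q is a fixed point of the composition ρ_{n+1} ∘ ⋯ ∘ ρ₁ and each ρ_i fixes every point where λ_i vanishes, then λ_i(y) = 0 for all i. -/
/-- Let `ρ i (x) = x - 2 λ i (x) • u i` on a set `Q ⊆ ℝ^{n+1}`, with `u₁,…,u_{n+1}`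
linearly independent, each `ρ i` mapping `Q` into `Q` and fixing every point where
`λ i` vanishes.  If `y ∈ Q` is a fixed point of the composition `ρ_{n+1} ∘ ⋯ ∘ ρ₁`,
then `λ i y = 0` for every `i`. -/
theorem stmt_10 (n : ℕ) (Q : Set (EuclideanSpace ℝ (Fin (n + 1))))
    (u : Fin (n + 1) → EuclideanSpace ℝ (Fin (n + 1)))
    (hu : LinearIndependent ℝ u)
    (lam : Fin (n + 1) → EuclideanSpace ℝ (Fin (n + 1)) → ℝ)
    (ρ : Fin (n + 1) → EuclideanSpace ℝ (Fin (n + 1)) → EuclideanSpace ℝ (Fin (n + 1)))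
    (hρ : ∀ i, ∀ x ∈ Q, ρ i x = x - (2 * lam i x) • u i)
    (hmaps : ∀ i, Set.MapsTo (ρ i) Q Q)
    (hfix : ∀ i, ∀ x ∈ Q, lam i x = 0 → ρ i x = x)
    (y : EuclideanSpace ℝ (Fin (n + 1))) (hy : y ∈ Q)
    (hfixed : Fin.foldl (n + 1) (fun x i => ρ i x) y = y) :
    ∀ i, lam i y = 0 := by
  classical
  set T : ℕ → EuclideanSpace ℝ (Fin (n + 1)) := fun k =>
    Nat.rec y (fun k xk => if h : k < n + 1 then ρ ⟨k, h⟩ xk else xk) k with hTdef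
  have hT0 : T 0 = y := rfl
  have hTs : ∀ k (h : k < n + 1), T (k + 1) = ρ ⟨k, h⟩ (T k) := by
    intro k h
    simp only [hTdef]
    rw [dif_pos h]
  have hTQ : ∀ k, T k ∈ Q := by
    intro k
    induction k with
    | zero => exact hy
    | succ k ih =>
      by_cases h : k < n + 1
      · rw [hTs k h]; exact hmaps _ ih
      · have : T (k + 1) = T k := by simp only [hTdef]; rw [dif_neg h]
        rw [this]; exact ih
  -- link with foldl
  have key : ∀ m (hm : m ≤ n + 1),
      Fin.foldl m (fun x i => ρ (Fin.castLE hm i) x) y = T m := by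
    intro m
    induction m with
    | zero => intro _; rw [Fin.foldl_zero]; exact hT0.symm
    | succ k ih =>
      intro hm
      have hk : k ≤ n + 1 := Nat.le_of_succ_le hm
      rw [Fin.foldl_succ_last]
      have h1 : (fun (x : EuclideanSpace ℝ (Fin (n+1))) (i : Fin k) =>
          ρ (Fin.castLE hm i.castSucc) x) = (fun x i => ρ (Fin.castLE hk i) x) := by
        funext x i
        congr 1
      rw [h1, ih hk, hTs k hm]
      congr 1
  have hTtop : T (n + 1) = y := by
    have := key (n + 1) le_rfl
    have h2 : (fun (x : EuclideanSpace ℝ (Fin (n+1))) (i : Fin (n+1)) =>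
        ρ (Fin.castLE le_rfl i) x) = (fun x i => ρ i x) := by
      funext x i; congr 1
    rw [h2] at this
    rw [← this, hfixed]
  -- telescoping
  set d : ℕ → EuclideanSpace ℝ (Fin (n + 1)) := fun k =>
    if h : k < n + 1 then (-(2 * lam ⟨k, h⟩ (T k))) • u ⟨k, h⟩ else 0 with hddef
  have htel : ∀ m, m ≤ n + 1 → T m = y + ∑ k ∈ Finset.range m, d k := by
    intro m
    induction m with
    | zero => intro _; simp [hT0]
    | succ k ih =>
      intro hm
      have hk' : k < n + 1 := hm
      have hdk : d k = (-(2 * lam ⟨k, hk'⟩ (T k))) • u ⟨k, hk'⟩ := by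
        simp only [hddef]; rw [dif_pos hk']
      have step : T (k + 1) = T k + d k := by
        rw [hTs k hk', hρ _ _ (hTQ k), hdk]; module
      rw [step, ih (Nat.le_of_succ_le hm), Finset.sum_range_succ, add_assoc]
  have hsum0 : ∑ k ∈ Finset.range (n + 1), d k = 0 := by
    have := htel (n + 1) le_rfl
    rw [hTtop] at this
    exact (add_eq_left.mp this.symm)
  have hsumFin : ∑ i : Fin (n + 1), (-(2 * lam i (T i.val))) • u i = 0 := by
    rw [← hsum0, ← Fin.sum_univ_eq_sum_range (fun k => d k)]
    refine Finset.sum_congr rfl ?_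
    intro i _
    simp only [hddef]
    rw [dif_pos i.isLt]
  have hlam : ∀ i : Fin (n + 1), lam i (T i.val) = 0 := by
    intro i
    have := Fintype.linearIndependent_iff.mp hu
      (fun i => -(2 * lam i (T i.val))) hsumFin i
    linarith
  have hTy : ∀ k, k ≤ n + 1 → T k = y := by
    intro k
    induction k with
    | zero => intro _; exact hT0
    | succ k ih =>
      intro hm
      have hk' : k < n + 1 := hm
      have hky : T k = y := ih (Nat.le_of_succ_le hm)
      have : lam ⟨k, hk'⟩ y = 0 := by
        have := hlam ⟨k, hk'⟩
        simpa [hky] using this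
      rw [hTs k hk', hky, hfix _ _ hy this]
  intro i
  have := hlam i
  rwa [hTy i.val (Nat.le_of_lt i.isLt)] at this
end

section
/- Let K be a compact strictly convex body in ℝ^{n+1} with nonempty interior and u a unit vector. Define ρ : ∂K → ∂K by sending x to the unique other point of ∂K on the line {x + t·u : t ∈ ℝ} if that line meets ∂K in two points, and ρ(x) = x if the line meets ∂K only at x. Then ρ is a well-defined involution of ∂K, i.e., ρ ∘ ρ = id. -/
/-!
Three distinct boundary points of a strictly convex set can never lie on one line: the middle
one lies in the open segment between the outer two, which strict convexity puts in the
interior. So a line through a boundary point `x` meets `∂K` in at most one further point,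
which is `ρ x`; and since `x` and `ρ x` span the same line, `x` is that further point for `ρ x`.
-/

open Set

theorem add_smul_mem_openSegment {E : Type*} [AddCommGroup E] [Module ℝ E] (x u : E)
    {a b c : ℝ} (hab : a < b) (hbc : b < c) :
    x + b • u ∈ openSegment ℝ (x + a • u) (x + c • u) := by
  have hline : ∀ t : ℝ, AffineMap.lineMap x (x + u) t = x + t • u := fun t => by
    rw [AffineMap.lineMap_apply, vsub_eq_sub, add_sub_cancel_left, vadd_eq_add, add_comm]
  rw [← hline, ← hline, ← hline, ← image_openSegment, openSegment_eq_Ioo (hab.trans hbc)]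
  exact mem_image_of_mem _ ⟨hab, hbc⟩

section

variable {E : Type*} [AddCommGroup E] [Module ℝ E] [TopologicalSpace E] {K : Set E}

theorem StrictConvex.notMem_frontier_of_mem_openSegment (hK : StrictConvex ℝ K) {x y z : E}
    (hx : x ∈ K) (hz : z ∈ K) (hxz : x ≠ z) (hy : y ∈ openSegment ℝ x z) : y ∉ frontier K :=
  fun hy' => hy'.2 (hK.openSegment_subset hx hz hxz hy)

theorem StrictConvex.add_smul_notMem_frontier (hK : StrictConvex ℝ K) (hKc : IsClosed K)
    {x u : E} (hu : u ≠ 0) {a b c : ℝ} (hab : a < b) (hbc : b < c)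
    (ha : x + a • u ∈ frontier K) (hc : x + c • u ∈ frontier K) : x + b • u ∉ frontier K := by
  have hac : x + a • u ≠ x + c • u := fun h =>
    (hab.trans hbc).ne (smul_left_injective ℝ hu (add_left_cancel h))
  exact hK.notMem_frontier_of_mem_openSegment (hKc.frontier_subset ha)
    (hKc.frontier_subset hc) hac (add_smul_mem_openSegment x u hab hbc)

theorem StrictConvex.eq_of_mem_frontier_of_mem_line (hK : StrictConvex ℝ K) (hKc : IsClosed K)
    {x u : E} {s t : ℝ} (hx : x ∈ frontier K) (hs : x + s • u ∈ frontier K)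
    (ht : x + t • u ∈ frontier K) (hsx : x + s • u ≠ x) (htx : x + t • u ≠ x) :
    x + s • u = x + t • u := by
  by_contra hst
  wlog hlt : s < t generalizing s t
  · exact this ht hs htx hsx (Ne.symm hst)
      ((le_of_not_gt hlt).lt_of_ne fun h => hst (h ▸ rfl))
  have hu : u ≠ 0 := by rintro rfl; simp at hsx
  have hx' : x + (0 : ℝ) • u ∈ frontier K := by rwa [zero_smul, add_zero]
  have hs0 : s ≠ 0 := by rintro rfl; simp at hsx
  have ht0 : t ≠ 0 := by rintro rfl; simp at htx
  rcases hs0.lt_or_gt with hs_neg | hs_pos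
  · rcases ht0.lt_or_gt with ht_neg | ht_pos
    · exact hK.add_smul_notMem_frontier hKc hu hlt ht_neg hs hx' ht
    · exact hK.add_smul_notMem_frontier hKc hu hs_neg ht_pos hs ht hx'
  · exact hK.add_smul_notMem_frontier hKc hu hs_pos hlt hx' ht hs

noncomputable def chordPartner (K : Set E) (u x : E) : E :=
  open Classical in
  if h : ∃ y ∈ frontier K, (∃ t : ℝ, y = x + t • u) ∧ y ≠ x then h.choose else x

def IsChordPartnerMap (K : Set E) (u : E) (ρ : E → E) : Prop :=
  ∀ x ∈ frontier K,
    ρ x ∈ frontier K ∧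
    (∃ t : ℝ, ρ x = x + t • u) ∧
    (ρ x = x ↔ ∀ y ∈ frontier K, (∃ t : ℝ, y = x + t • u) → y = x) ∧
    (∀ y ∈ frontier K, (∃ t : ℝ, y = x + t • u) → y = x ∨ y = ρ x)

theorem StrictConvex.isChordPartnerMap_chordPartner (hK : StrictConvex ℝ K) (hKc : IsClosed K)
    (u : E) : IsChordPartnerMap K u (chordPartner K u) := by
  intro x hx
  by_cases h : ∃ y ∈ frontier K, (∃ t : ℝ, y = x + t • u) ∧ y ≠ x
  · obtain ⟨hρ, ⟨t, hρt⟩, hρx⟩ := h.choose_spec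
    rw [chordPartner, dif_pos h]
    refine ⟨hρ, ⟨t, hρt⟩, iff_of_false hρx fun hall => hρx (hall _ hρ ⟨t, hρt⟩), ?_⟩
    rintro y hy ⟨s, rfl⟩
    refine or_iff_not_imp_left.2 fun hyx => ?_
    rw [hρt] at hρ hρx ⊢
    exact hK.eq_of_mem_frontier_of_mem_line hKc hx hy hρ hyx hρx
  · rw [chordPartner, dif_neg h]
    push Not at h
    exact ⟨hx, ⟨0, by simp⟩, iff_of_true rfl h, fun y hy hyl => Or.inl (h y hy hyl)⟩

theorem IsChordPartnerMap.apply_apply {u : E} {ρ : E → E} (hρ : IsChordPartnerMap K u ρ)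
    {x : E} (hx : x ∈ frontier K) : ρ (ρ x) = x := by
  obtain ⟨hρx, ⟨t, hρt⟩, -, -⟩ := hρ x hx
  by_cases hfix : ρ x = x
  · rw [hfix, hfix]
  · have hx_line : ∃ s : ℝ, x = ρ x + s • u := ⟨-t, by rw [hρt, neg_smul, add_neg_cancel_right]⟩
    exact ((hρ (ρ x) hρx).2.2.2 x hx hx_line).resolve_left (Ne.symm hfix) |>.symm

end

theorem stmt_13_general (n : ℕ) (K : Set (EuclideanSpace ℝ (Fin (n + 1))))
    (hKc : IsCompact K) (hKconv : StrictConvex ℝ K)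
    (u : EuclideanSpace ℝ (Fin (n + 1)))
    (Spec : (EuclideanSpace ℝ (Fin (n + 1)) → EuclideanSpace ℝ (Fin (n + 1))) → Prop)
    (hSpec : ∀ ρ, Spec ρ ↔ ∀ x ∈ frontier K,
      ρ x ∈ frontier K ∧
      (∃ t : ℝ, ρ x = x + t • u) ∧
      (ρ x = x ↔ ∀ y ∈ frontier K, (∃ t : ℝ, y = x + t • u) → y = x) ∧
      (∀ y ∈ frontier K, (∃ t : ℝ, y = x + t • u) → y = x ∨ y = ρ x)) :
    (∃ ρ, Spec ρ) ∧
    (∀ ρ, Spec ρ → ∀ x ∈ frontier K, ρ (ρ x) = x) := by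
  have hSpec' : ∀ ρ, Spec ρ ↔ IsChordPartnerMap K u ρ := hSpec
  exact ⟨⟨_, (hSpec' _).2 (hKconv.isChordPartnerMap_chordPartner hKc.isClosed u)⟩,
    fun ρ hρ _ hx => ((hSpec' ρ).1 hρ).apply_apply hx⟩

/-- Let `K` be a compact strictly convex body in `ℝ^{n+1}` with nonempty interior and `u`
a unit vector.  The map `ρ : ∂K → ∂K` sending `x` to the unique other point of `∂K` on
the line `{x + t • u}` when that line meets `∂K` twice, and fixing `x` when the line
meets `∂K` only at `x`, is well defined (it exists) and is an involution: `ρ ∘ ρ = id`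
on `∂K`. -/
theorem stmt_13 (n : ℕ) (K : Set (EuclideanSpace ℝ (Fin (n + 1))))
    (hKc : IsCompact K) (hKconv : StrictConvex ℝ K) (hKint : (interior K).Nonempty)
    (u : EuclideanSpace ℝ (Fin (n + 1))) (hu : ‖u‖ = 1)
    (Spec : (EuclideanSpace ℝ (Fin (n + 1)) → EuclideanSpace ℝ (Fin (n + 1))) → Prop)
    (hSpec : ∀ ρ, Spec ρ ↔ ∀ x ∈ frontier K,
      ρ x ∈ frontier K ∧
      (∃ t : ℝ, ρ x = x + t • u) ∧
      (ρ x = x ↔ ∀ y ∈ frontier K, (∃ t : ℝ, y = x + t • u) → y = x) ∧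
      (∀ y ∈ frontier K, (∃ t : ℝ, y = x + t • u) → y = x ∨ y = ρ x)) :
    (∃ ρ, Spec ρ) ∧
    (∀ ρ, Spec ρ → ∀ x ∈ frontier K, ρ (ρ x) = x) :=
  stmt_13_general n K hKc hKconv u Spec hSpec
end

section
/- Let u₁,…,u_N be unit vectors in ℝ^{n+1} and let M₀ be a nonempty finite set of signed points (a 0-cycle with integer multiplicities) in ℝ^{n+1}. Define recursively M_i = M_{i-1} ∪ (-M_{i-1} + c_i u_i), the union with an orientation-reversed translate, choosing c_i large enough that the translate is disjoint from M_{i-1}. Then the projection of the 0-cycle M_N onto each hyperplane u_i^⊥ is the zero 0-cycle (all signed multiplicities cancel). -/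
open scoped RealInnerProductSpace

/-- Let `u₁,…,u_N` be unit vectors in `ℝ^{n+1}` and `m₀` a nonempty finite set of signed
points (a `0`-cycle with integer multiplicities).  Define recursively
`M_i = M_{i-1} ∪ (-M_{i-1} + c_i u_i)` (the union with an orientation-reversed translate,
`c_i` chosen to make the supports disjoint).  Then the projection of `M_N` onto each
hyperplane `u_i^⊥` (pushforward along `x ↦ x - ⟪x,u_i⟫u_i`) is the zero `0`-cycle. -/
theorem stmt_16 (n N : ℕ)
    (u : Fin N → EuclideanSpace ℝ (Fin (n + 1))) (hu : ∀ i, ‖u i‖ = 1)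
    (c : Fin N → ℝ)
    (m₀ : EuclideanSpace ℝ (Fin (n + 1)) →₀ ℤ) (hm₀ : m₀ ≠ 0)
    (M : Fin (N + 1) → (EuclideanSpace ℝ (Fin (n + 1)) →₀ ℤ))
    (hM0 : M 0 = m₀)
    (hMsucc : ∀ i : Fin N,
      M i.succ = M i.castSucc -
        Finsupp.mapDomain (fun x => x + c i • u i) (M i.castSucc))
    (hdisj : ∀ i : Fin N,
      Disjoint (M i.castSucc).support
        (Finsupp.mapDomain (fun x => x + c i • u i) (M i.castSucc)).support) :
    ∀ i : Fin N,
      Finsupp.mapDomain (fun x => x - ⟪x, u i⟫ • u i) (M (Fin.last N)) = 0 := by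
  intro i
  set π : EuclideanSpace ℝ (Fin (n + 1)) → EuclideanSpace ℝ (Fin (n + 1)) :=
    fun x => x - ⟪x, u i⟫ • u i with hπ
  have huu : ⟪u i, u i⟫ = (1 : ℝ) := by
    rw [real_inner_self_eq_norm_sq, hu i]; norm_num
  -- π kills translations along u i
  have hπtrans : ∀ (t : ℝ) (x : EuclideanSpace ℝ (Fin (n + 1))), π (x + t • u i) = π x := by
    intro t x
    simp only [hπ, inner_add_left, real_inner_smul_left, huu, mul_one, add_smul]
    abel
  -- π is "additive" with shift: π (x + v) = π x + π v  (π is linear)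
  have hπlin : ∀ x v : EuclideanSpace ℝ (Fin (n + 1)), π (x + v) = π x + π v := by
    intro x v
    simp only [hπ, inner_add_left, add_smul]
    abel
  -- key claim by strong induction
  have key : ∀ k : ℕ, (hk : k ≤ N) → (i : ℕ) < k →
      Finsupp.mapDomain π (M ⟨k, Nat.lt_succ_of_le hk⟩) = 0 := by
    intro k
    induction k with
    | zero => intro _ h; omega
    | succ k ih =>
      intro hk hik
      have hkN : k < N := hk
      set j : Fin N := ⟨k, hkN⟩ with hj
      have hsucc : M ⟨k + 1, Nat.lt_succ_of_le hk⟩ = M j.succ := rfl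
      have hcast : M j.castSucc = M ⟨k, Nat.lt_succ_of_le (le_of_lt hkN)⟩ := rfl
      rw [hsucc, hMsucc j]
      have hmapsub : ∀ a b : EuclideanSpace ℝ (Fin (n + 1)) →₀ ℤ,
          Finsupp.mapDomain π (a - b) =
            Finsupp.mapDomain π a - Finsupp.mapDomain π b := by
        intro a b
        exact map_sub (Finsupp.mapDomain.addMonoidHom π) a b
      rw [hmapsub]
      by_cases hik' : (i : ℕ) = k
      · -- the step where the cancellation happens: j = i
        have hji : j = i := by ext; simp [hj, hik'.symm]
        subst hji
        rw [← Finsupp.mapDomain_comp]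
        have : π ∘ (fun x => x + c j • u j) = π := by
          funext x; exact hπtrans _ x
        rw [this, sub_self]
      · -- later steps: projection already zero, stays zero
        have hik2 : (i : ℕ) < k := by omega
        have h0 : Finsupp.mapDomain π (M j.castSucc) = 0 := by
          rw [hcast]; exact ih (le_of_lt hkN) hik2
        rw [h0]
        rw [← Finsupp.mapDomain_comp]
        have hcomp : π ∘ (fun x => x + c j • u j) =
            (fun y => y + c j • π (u j)) ∘ π := by
          funext x
          simp only [Function.comp_apply]
          rw [hπlin x (c j • u j)]
          congr 1
          simp only [hπ, real_inner_smul_left, smul_sub, smul_smul]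
        rw [hcomp, Finsupp.mapDomain_comp, h0]
        simp [Finsupp.mapDomain_zero, sub_zero]
  exact key N le_rfl i.isLt
end
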